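/- Define α₁ = 2 and α_{j+1} = 2 + 2/W((2/(α_j+2))·e^{-2/(α_j+2)}) for j ≥ 1, where W is the Lambert W function. Then for all i ≥ 2 one has 8i - 6 < α_i < 8i - 5; in particular α_i is not a natural number for i ≥ 2. -/

import Mathlib

/-!
Write `t = 2 / (α j + 2)` and `s = W (t e^{-t})`, so that `α (j + 1) = 2 + 2 / s` and
`s e^s = t e^{-t}`. Since `x ↦ x e^x` is increasing, comparing `σ e^σ` with `t e^{-t}`, i.e.
`σ e^{σ + t}` with `t`, locates `s`: the quadratic Taylor bound for `exp` gives `s < t / (1 + 2t)`,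
and a cubic upper bound for `exp` gives `t / (1 + 2t + 3t³) ≤ s` once `t ≤ 1/6`. In terms of `α` this
reads `α j + 8 < α (j + 1) ≤ α j + 8 + 24 / (α j + 2)²`, and the error terms telescope against
`1 / i - 1 / (i + 1)`, which keeps `α i` below `8i - 5 - 1/i`; at `i = 2` this bound `α 2 ≤ 21/2` amounts to
`e^{25/34} ≤ 17/8`.
-/

open Real Set

lemma strictMonoOn_mul_exp : StrictMonoOn (fun x : ℝ => x * exp x) (Ici 0) :=
  fun _ ha _ _ hab => mul_lt_mul'' hab (exp_lt_exp.2 hab) ha (exp_pos _).le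

lemma lt_of_mul_exp_eq_mul_exp_neg {s t σ : ℝ} (hs : 0 ≤ s) (hσ : 0 ≤ σ)
    (h : s * exp s = t * exp (-t)) (hσt : t < σ * exp (σ + t)) : s < σ := by
  rw [exp_add, ← mul_assoc, ← div_lt_iff₀ (exp_pos t), div_eq_mul_inv, ← exp_neg, ← h] at hσt
  exact (strictMonoOn_mul_exp.lt_iff_lt hs hσ).mp hσt

lemma le_of_mul_exp_eq_mul_exp_neg {s t σ : ℝ} (hs : 0 ≤ s) (hσ : 0 ≤ σ)
    (h : s * exp s = t * exp (-t)) (hσt : σ * exp (σ + t) ≤ t) : σ ≤ s := by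
  rw [exp_add, ← mul_assoc, ← le_div_iff₀ (exp_pos t), div_eq_mul_inv, ← exp_neg, ← h] at hσt
  exact (strictMonoOn_mul_exp.le_iff_le hσ hs).mp hσt

lemma exp_le_cubic {x : ℝ} (h0 : 0 ≤ x) (h1 : x ≤ 1) :
    exp x ≤ 1 + x + x ^ 2 / 2 + 2 / 9 * x ^ 3 := by
  have h := exp_bound' h0 h1 (n := 3) (by norm_num)
  norm_num [Finset.sum_range_succ, Nat.factorial] at h
  linarith

lemma lt_div_of_mul_exp_eq_mul_exp_neg {s t : ℝ} (hs : 0 ≤ s) (ht : 0 < t)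
    (h : s * exp s = t * exp (-t)) : s < t / (1 + 2 * t) := by
  set σ := t / (1 + 2 * t) with hσ
  have hσt : t < σ * exp (σ + t) :=
    calc t < σ * (1 + (σ + t) + (σ + t) ^ 2 / 2) := by
          rw [← sub_pos]
          have : σ * (1 + (σ + t) + (σ + t) ^ 2 / 2) - t = 2 * t ^ 5 / (1 + 2 * t) ^ 3 := by
            rw [hσ]; field_simp; ring
          rw [this]; positivity
      _ ≤ σ * exp (σ + t) := by gcongr; exact quadratic_le_exp_of_nonneg (by positivity)
  exact lt_of_mul_exp_eq_mul_exp_neg hs (by positivity) h hσt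

lemma div_add_self_le {t : ℝ} (ht : 0 < t) (ht6 : t ≤ 1 / 6) :
    t / (1 + 2 * t + 3 * t ^ 3) + t ≤ 2 * t - 2 * t ^ 2 + 4 * t ^ 3 - 7 * t ^ 4 := by
  have hD : (0 : ℝ) < 1 + 2 * t + 3 * t ^ 3 := by positivity
  rw [div_add' _ _ _ hD.ne', div_le_iff₀ hD]
  nlinarith [mul_nonneg (pow_pos ht 4).le (by linarith : (0 : ℝ) ≤ 4 - 20 * t),
    mul_nonneg (pow_pos ht 6).le (by linarith : (0 : ℝ) ≤ 12 - 21 * t)]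

lemma cubic_taylor_le {t : ℝ} (ht : 0 < t) (ht6 : t ≤ 1 / 6) :
    let u := 2 * t - 2 * t ^ 2 + 4 * t ^ 3 - 7 * t ^ 4
    1 + u + u ^ 2 / 2 + 2 / 9 * u ^ 3 ≤ 1 + 2 * t + 3 * t ^ 3 := by
  intro u
  have h16 : (0 : ℝ) ≤ 1 - 6 * t := by linarith
  nlinarith [pow_pos ht 3, pow_pos ht 5, pow_pos ht 7, pow_pos ht 4, pow_pos ht 6,
    pow_pos ht 8, pow_pos ht 9, pow_pos ht 10, pow_pos ht 11, pow_pos ht 12,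
    mul_nonneg (pow_pos ht 3).le h16, mul_nonneg (pow_pos ht 5).le h16,
    mul_nonneg (pow_pos ht 7).le h16, mul_nonneg (pow_pos ht 9).le h16,
    mul_nonneg (pow_pos ht 10).le h16]

lemma exp_div_add_self_le {t : ℝ} (ht : 0 < t) (ht6 : t ≤ 1 / 6) :
    exp (t / (1 + 2 * t + 3 * t ^ 3) + t) ≤ 1 + 2 * t + 3 * t ^ 3 := by
  set u := 2 * t - 2 * t ^ 2 + 4 * t ^ 3 - 7 * t ^ 4
  have hu : t / (1 + 2 * t + 3 * t ^ 3) + t ≤ u := div_add_self_le ht ht6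
  calc exp (t / (1 + 2 * t + 3 * t ^ 3) + t) ≤ exp u := exp_le_exp.2 hu
    _ ≤ 1 + u + u ^ 2 / 2 + 2 / 9 * u ^ 3 :=
        exp_le_cubic (le_trans (by positivity) hu) (by nlinarith)
    _ ≤ 1 + 2 * t + 3 * t ^ 3 := cubic_taylor_le ht ht6

lemma div_le_of_mul_exp_eq_mul_exp_neg {s t : ℝ} (hs : 0 ≤ s) (ht : 0 < t) (ht6 : t ≤ 1 / 6)
    (h : s * exp s = t * exp (-t)) : t / (1 + 2 * t + 3 * t ^ 3) ≤ s := by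
  refine le_of_mul_exp_eq_mul_exp_neg hs (by positivity) h ?_
  calc t / (1 + 2 * t + 3 * t ^ 3) * exp (t / (1 + 2 * t + 3 * t ^ 3) + t)
      ≤ t / (1 + 2 * t + 3 * t ^ 3) * (1 + 2 * t + 3 * t ^ 3) := by
        gcongr; exact exp_div_add_self_le ht ht6
    _ = t := div_mul_cancel₀ t (by positivity)

section Step

variable {a s : ℝ} (hs : 0 < s) (h : s * exp s = 2 / (a + 2) * exp (-(2 / (a + 2))))
include hs h

lemma add_eight_lt_two_add_two_div (ha : 0 < a + 2) : a + 8 < 2 + 2 / s := by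
  have hlt := lt_div_of_mul_exp_eq_mul_exp_neg hs.le (by positivity) h
  have : 2 / (2 / (a + 2) / (1 + 2 * (2 / (a + 2)))) = a + 6 := by field_simp; ring
  linarith [this ▸ div_lt_div_of_pos_left two_pos hs hlt]

lemma two_add_two_div_le (ha : 10 ≤ a) : 2 + 2 / s ≤ a + 8 + 24 / (a + 2) ^ 2 := by
  have ht6 : 2 / (a + 2) ≤ 1 / 6 := by rw [div_le_div_iff₀ (by linarith) (by norm_num)]; linarith
  have hle := div_le_of_mul_exp_eq_mul_exp_neg hs.le (by positivity) ht6 h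
  have : 2 / (2 / (a + 2) / (1 + 2 * (2 / (a + 2)) + 3 * (2 / (a + 2)) ^ 3)) =
      a + 6 + 24 / (a + 2) ^ 2 := by
    have : a + 2 ≠ 0 := by linarith
    field_simp; ring
  linarith [this ▸ div_le_div_of_nonneg_left zero_le_two (by positivity) hle]

end Step

lemma two_add_two_div_le_of_mul_exp_eq_half {s : ℝ} (hs : 0 < s)
    (h : s * exp s = 2 / (2 + 2) * exp (-(2 / (2 + 2)))) : 2 + 2 / s ≤ 21 / 2 := by
  have hexp : exp (25 / 34 : ℝ) ≤ 17 / 8 := by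
    nlinarith [exp_le_cubic (x := 25 / 34) (by norm_num) (by norm_num)]
  have hle : (4 / 17 : ℝ) ≤ s := by
    refine le_of_mul_exp_eq_mul_exp_neg hs.le (by norm_num) h ?_
    norm_num; linarith
  have := div_le_div_of_nonneg_left zero_le_two (by norm_num) hle
  norm_num at this; linarith

lemma div_sq_le_inv_sub_inv_add_one {i a : ℝ} (hi : 2 ≤ i) (hl : 8 * i - 6 < a) :
    24 / (a + 2) ^ 2 ≤ 1 / i - 1 / (i + 1) := by
  have hsq : 24 / (a + 2) ^ 2 ≤ 24 / (8 * i - 4) ^ 2 :=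
    div_le_div_of_nonneg_left (by norm_num) (by nlinarith) (by nlinarith)
  -- `3 i (i + 1) ≤ 2 (2i - 1)²` is `0 ≤ (5i - 1)(i - 2)`
  have htel : 24 / (8 * i - 4) ^ 2 ≤ 1 / i - 1 / (i + 1) := by
    rw [div_sub_div _ _ (by positivity) (by positivity),
      div_le_div_iff₀ (by nlinarith) (by positivity)]
    nlinarith
  exact hsq.trans htel

lemma natCast_ne_of_lt_of_lt {x : ℝ} {m : ℤ} (h₁ : m < x) (h₂ : x < m + 1) (n : ℕ) :
    x ≠ n := by
  rintro rfl
  have h₁' : m < (n : ℤ) := by exact_mod_cast h₁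
  have h₂' : (n : ℤ) < m + 1 := by exact_mod_cast h₂
  omega

lemma bounds_of_mul_exp_recursion {α : ℕ → ℝ} (hα1 : α 1 = 2)
    (hnext : ∀ j ≥ 1, 0 < α j + 2 → ∃ s > 0,
      s * exp s = 2 / (α j + 2) * exp (-(2 / (α j + 2))) ∧ α (j + 1) = 2 + 2 / s) :
    ∀ i : ℕ, 2 ≤ i → 8 * (i : ℝ) - 6 < α i ∧ α i ≤ 8 * (i : ℝ) - 5 - 1 / i := by
  intro i hi
  induction i, hi using Nat.le_induction with
  | base =>
    obtain ⟨s, hs, h, hα2⟩ := hnext 1 le_rfl (by rw [hα1]; norm_num)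
    rw [hα1] at h
    have hl := add_eight_lt_two_add_two_div hs h (by norm_num)
    have hu := two_add_two_div_le_of_mul_exp_eq_half hs h
    norm_num [hα2]
    constructor <;> linarith
  | succ i hi ih =>
    have hi2 : (2 : ℝ) ≤ i := by exact_mod_cast hi
    obtain ⟨s, hs, h, hαs⟩ := hnext i (by omega) (by linarith)
    have hl := add_eight_lt_two_add_two_div hs h (by linarith)
    have hu := two_add_two_div_le hs h (by linarith)
    have htel := div_sq_le_inv_sub_inv_add_one hi2 ih.1
    push_cast
    constructor <;> linarith

theorem stmt_6_general (W : ℝ → ℝ)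
    (hW' : ∀ y > 0, 0 < W y ∧ W y * Real.exp (W y) = y)
    (α : ℕ → ℝ) (hα1 : α 1 = 2)
    (hrec : ∀ j ≥ 1, α (j + 1) =
      2 + 2 / W ((2 / (α j + 2)) * Real.exp (-(2 / (α j + 2))))) :
    ∀ i : ℕ, 2 ≤ i → (8 * (i : ℝ) - 6 < α i ∧ α i < 8 * (i : ℝ) - 5) ∧
      ∀ n : ℕ, α i ≠ (n : ℝ) := by
  have hnext : ∀ j ≥ 1, 0 < α j + 2 → ∃ s > 0,
      s * exp s = 2 / (α j + 2) * exp (-(2 / (α j + 2))) ∧ α (j + 1) = 2 + 2 / s :=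
    fun j hj hpos =>
      have hW := hW' _ (by positivity : 0 < 2 / (α j + 2) * exp (-(2 / (α j + 2))))
      ⟨_, hW.1, hW.2, hrec j hj⟩
  intro i hi
  obtain ⟨hl, hu⟩ := bounds_of_mul_exp_recursion hα1 hnext i hi
  have hu' : α i < 8 * (i : ℝ) - 5 := by
    have : (0 : ℝ) < 1 / i := by positivity
    linarith
  refine ⟨⟨hl, hu'⟩, natCast_ne_of_lt_of_lt (m := 8 * i - 6) ?_ ?_⟩ <;> push_cast <;> linarith

theorem stmt_6 (W : ℝ → ℝ)
    (hW : ∀ t > 0, W (t * Real.exp t) = t)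
    (hW' : ∀ y > 0, 0 < W y ∧ W y * Real.exp (W y) = y)
    (α : ℕ → ℝ) (hα1 : α 1 = 2)
    (hrec : ∀ j ≥ 1, α (j + 1) =
      2 + 2 / W ((2 / (α j + 2)) * Real.exp (-(2 / (α j + 2))))) :
    ∀ i : ℕ, 2 ≤ i → (8 * (i : ℝ) - 6 < α i ∧ α i < 8 * (i : ℝ) - 5) ∧
      ∀ n : ℕ, α i ≠ (n : ℝ) :=
  stmt_6_general W hW' α hα1 hrec
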